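/- arXiv:2201.06111 — 5 statements merged into one kernel-verified Lean document; each statement's English description precedes it below -/
import Mathlib

section
/- Assume char k ≠ 2. If P is antisymmetric (σ·P = sign(σ)·P for all σ ∈ S_n) and m-quasi-invariant, then P = K·∏_{i<j}(x_i - x_j)^{2m+1} for some symmetric polynomial K. Conversely, for every symmetric polynomial K, the polynomial K·∏_{i<j}(x_i - x_j)^{2m+1} is antisymmetric and m-quasi-invariant. -/
/-!
For an antisymmetric `P` the transposition `s_{ij}` acts by `-1`, so `P - s_{ij} P = 2 P` and,
as `2` is invertible, `m`-quasi-invariance says exactly that `(x_i - x_j)^(2m+1)` divides `P`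
for all `i ≠ j`. The linear forms `x_i - x_j` (`i < j`) are pairwise non-associated primes, so
this is equivalent to `discPow` dividing `P`. Finally `discPow` is an odd power of the
Vandermonde determinant, hence antisymmetric and nonzero, so `K * discPow` is antisymmetric
exactly when `K` is symmetric.
-/

open MvPolynomial

/-- `P` is `m`-quasi-invariant. -/
def QuasiInvariant (k : Type*) [Field k] (n m : ℕ) (P : MvPolynomial (Fin n) k) : Prop :=
  ∀ i j : Fin n, i ≠ j →
    (X i - X j) ^ (2 * m + 1) ∣ P - rename (Equiv.swap i j) P

/-- The product `∏_{i<j} (x_i - x_j)^(2m+1)`. -/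
noncomputable def discPow (k : Type*) [Field k] (n m : ℕ) : MvPolynomial (Fin n) k :=
  ∏ p ∈ Finset.univ.filter (fun p : Fin n × Fin n => p.1 < p.2),
    (X p.1 - X p.2) ^ (2 * m + 1)

namespace MvPolynomial

open Equiv Finset
open Matrix (vandermonde det_vandermonde det_permute)

section Antisymmetric

variable {σ R : Type*} [CommRing R] [Fintype σ] [DecidableEq σ]

def IsAntisymmetric (φ : MvPolynomial σ R) : Prop :=
  ∀ e : Perm σ, rename e φ = (Perm.sign e : ℤ) • φ

theorem IsSymmetric.mul_isAntisymmetric {φ ψ : MvPolynomial σ R} (hφ : φ.IsSymmetric)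
    (hψ : ψ.IsAntisymmetric) : (φ * ψ).IsAntisymmetric := fun e => by
  rw [map_mul, hφ e, hψ e, mul_smul_comm]

theorem IsAntisymmetric.pow_of_odd {φ : MvPolynomial σ R} (hφ : φ.IsAntisymmetric) {k : ℕ}
    (hk : Odd k) : (φ ^ k).IsAntisymmetric := fun e => by
  rw [map_pow, hφ e, smul_pow, ← Units.val_pow_eq_pow_val, Int.units_pow_eq_pow_mod_two,
    Nat.odd_iff.1 hk, pow_one]

theorem IsSymmetric.of_mul_isAntisymmetric [IsDomain R] {φ ψ : MvPolynomial σ R}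
    (hψ : ψ.IsAntisymmetric) (hψ0 : ψ ≠ 0) (h : (φ * ψ).IsAntisymmetric) : φ.IsSymmetric :=
  fun e => by
  have h := h e
  rw [map_mul, hψ e, mul_smul_comm, ← Units.smul_def, ← Units.smul_def,
    smul_left_cancel_iff] at h
  exact mul_right_cancel₀ hψ0 h

theorem IsAntisymmetric.rename_swap {φ : MvPolynomial σ R} (hφ : φ.IsAntisymmetric) {i j : σ}
    (hij : i ≠ j) : rename (swap i j) φ = -φ := by
  rw [hφ, Perm.sign_swap hij, Units.val_neg, Units.val_one, neg_one_zsmul]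

end Antisymmetric

section Vandermonde

theorem prod_filter_lt_eq_prod_prod_Ioi {α M : Type*} [Fintype α] [LinearOrder α]
    [LocallyFiniteOrderTop α] [CommMonoid M] (f : α → α → M) :
    ∏ p ∈ univ.filter (fun p : α × α => p.1 < p.2), f p.1 p.2
      = ∏ i, ∏ j ∈ Ioi i, f i j := by
  rw [prod_filter, Fintype.prod_prod_type]
  refine prod_congr rfl fun i _ => ?_
  rw [← prod_filter]
  congr 1
  ext; simp

variable {R : Type*} [CommRing R] {n : ℕ}

-- `det_vandermonde` has the factors `v j - v i` for `i < j`; negating the variables flips them.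
theorem prod_X_sub_X_eq_det_vandermonde :
    ∏ p ∈ univ.filter (fun p : Fin n × Fin n => p.1 < p.2), (X p.1 - X p.2)
      = (vandermonde fun i => -X i : Matrix (Fin n) (Fin n) (MvPolynomial (Fin n) R)).det := by
  simp only [det_vandermonde, neg_sub_neg,
    prod_filter_lt_eq_prod_prod_Ioi fun i j => (X i - X j : MvPolynomial (Fin n) R)]

theorem isAntisymmetric_det_vandermonde :
    (vandermonde fun i => -X i : Matrix (Fin n) (Fin n) (MvPolynomial (Fin n) R)).det
      |>.IsAntisymmetric := fun e => by
  have hrows : (vandermonde fun i => -X i).map (rename e)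
      = (vandermonde fun i => -X i : Matrix (Fin n) (Fin n) (MvPolynomial (Fin n) R)).submatrix
          e id := by
    ext i j; simp [vandermonde]
  rw [AlgHom.map_det, AlgHom.mapMatrix_apply, hrows, det_permute, zsmul_eq_mul]

end Vandermonde

section Divisibility

variable {σ R : Type*} [CommRing R]

-- Singling out the variable `i`, `X i - X j` becomes `X - C (X j)` over the remaining variables.
theorem prime_X_sub_X [IsDomain R] {i j : σ} (h : i ≠ j) :
    Prime (X i - X j : MvPolynomial σ R) := by
  classical
  let φ := (renameEquiv R (Equiv.optionSubtypeNe i).symm).trans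
      (optionEquivLeft R {b : σ // b ≠ i})
  have hφ : φ (X i - X j) = Polynomial.X - Polynomial.C (X ⟨j, h.symm⟩) := by
    simp [φ, Equiv.optionSubtypeNe_symm_of_ne h.symm, optionEquivLeft_X_none,
      optionEquivLeft_X_some]
  rw [← MulEquiv.prime_iff φ.toRingEquiv.toMulEquiv]
  exact hφ ▸ Polynomial.prime_X_sub_C _

-- Otherwise evaluating at the indicator function of `a` gives `0 ∣ 1`.
theorem eq_or_eq_of_X_sub_X_dvd [Nontrivial R] {i j a b : σ} (hab : a ≠ b)
    (h : (X i - X j : MvPolynomial σ R) ∣ X a - X b) : a = i ∨ a = j := by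
  classical
  by_contra! hne
  have := (eval (fun t => if t = a then (1 : R) else 0)).map_dvd h
  simp [hne.1.symm, hne.2.symm, hab.symm] at this

theorem isRelPrime_X_sub_X [IsDomain R] [LinearOrder σ] {i j a b : σ} (hij : i < j)
    (hab : a < b) (hne : (i, j) ≠ (a, b)) :
    IsRelPrime (X i - X j : MvPolynomial σ R) (X a - X b) := by
  refine (prime_X_sub_X hij.ne).irreducible.isRelPrime_iff_not_dvd.2 fun hd => hne ?_
  have ha := eq_or_eq_of_X_sub_X_dvd hab.ne hd
  have hb := eq_or_eq_of_X_sub_X_dvd hab.ne' (dvd_sub_comm.1 hd)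
  ext <;> grind

end Divisibility

end MvPolynomial

section DiscPow

variable {k : Type*} [Field k] {n m : ℕ}

theorem isAntisymmetric_discPow : (discPow k n m).IsAntisymmetric := by
  rw [discPow, Finset.prod_pow, prod_X_sub_X_eq_det_vandermonde]
  exact isAntisymmetric_det_vandermonde.pow_of_odd (odd_two_mul_add_one m)

theorem discPow_ne_zero : discPow k n m ≠ 0 :=
  Finset.prod_ne_zero_iff.2 fun _ hp =>
    pow_ne_zero _ (prime_X_sub_X (Finset.mem_filter.1 hp).2.ne).ne_zero

theorem pow_X_sub_X_dvd_discPow {i j : Fin n} (h : i ≠ j) :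
    (X i - X j : MvPolynomial (Fin n) k) ^ (2 * m + 1) ∣ discPow k n m := by
  rcases h.lt_or_gt with hlt | hlt
  · exact Finset.dvd_prod_of_mem (fun p : Fin n × Fin n => (X p.1 - X p.2) ^ (2 * m + 1))
      (a := (i, j)) (by simp [hlt])
  · rw [← neg_sub, (odd_two_mul_add_one m).neg_pow, neg_dvd]
    exact Finset.dvd_prod_of_mem (fun p : Fin n × Fin n => (X p.1 - X p.2) ^ (2 * m + 1))
      (a := (j, i)) (by simp [hlt])

theorem discPow_dvd_iff {P : MvPolynomial (Fin n) k} :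
    discPow k n m ∣ P ↔ ∀ i j : Fin n, i ≠ j → (X i - X j) ^ (2 * m + 1) ∣ P := by
  refine ⟨fun h i j hij => (pow_X_sub_X_dvd_discPow hij).trans h, fun h => ?_⟩
  refine Finset.prod_dvd_of_isRelPrime ?_ fun p hp => h _ _ (Finset.mem_filter.1 hp).2.ne
  rintro ⟨i, j⟩ hp ⟨a, b⟩ hq hne
  simp only [Finset.coe_filter, Finset.mem_univ, true_and] at hp hq
  exact (isRelPrime_X_sub_X hp hq hne).pow

theorem quasiInvariant_iff_of_isAntisymmetric (hk : ringChar k ≠ 2)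
    {P : MvPolynomial (Fin n) k} (hP : P.IsAntisymmetric) :
    QuasiInvariant k n m P ↔ ∀ i j : Fin n, i ≠ j → (X i - X j) ^ (2 * m + 1) ∣ P := by
  have h2 : IsUnit (2 : MvPolynomial (Fin n) k) := by
    simpa only [map_ofNat] using (isUnit_iff_ne_zero.2 (Ring.two_ne_zero hk)).map (C (σ := Fin n))
  refine forall₃_congr fun i j hij => ?_
  rw [hP.rename_swap hij, sub_neg_eq_add, ← two_mul, h2.dvd_mul_left]

end DiscPow

theorem antisymmetric_quasiInvariant_iff (k : Type*) [Field k]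
    (hk : ringChar k ≠ 2) (n m : ℕ) :
    (∀ P : MvPolynomial (Fin n) k, QuasiInvariant k n m P →
      (∀ σ : Equiv.Perm (Fin n), rename σ P = (Equiv.Perm.sign σ : ℤ) • P) →
      ∃ K : MvPolynomial (Fin n) k, K.IsSymmetric ∧ P = K * discPow k n m) ∧
    (∀ K : MvPolynomial (Fin n) k, K.IsSymmetric →
      QuasiInvariant k n m (K * discPow k n m) ∧
      (∀ σ : Equiv.Perm (Fin n),
        rename σ (K * discPow k n m) = (Equiv.Perm.sign σ : ℤ) • (K * discPow k n m))) := by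
  constructor
  · intro P hQ hP
    obtain ⟨K, rfl⟩ := discPow_dvd_iff.2 ((quasiInvariant_iff_of_isAntisymmetric hk hP).1 hQ)
    rw [mul_comm] at hP
    exact ⟨K, .of_mul_isAntisymmetric isAntisymmetric_discPow discPow_ne_zero hP, mul_comm _ _⟩
  · intro K hK
    have hA := hK.mul_isAntisymmetric (isAntisymmetric_discPow (m := m))
    exact ⟨(quasiInvariant_iff_of_isAntisymmetric hk hA).2
      (discPow_dvd_iff.1 (dvd_mul_left _ _)), hA⟩
end

section
/- Assume char k ≠ 2. If a nonzero m-quasi-invariant polynomial P in k[x_1,x_2] satisfies s_{1,2}·P = -P, then P = K·(x_1 - x_2)^{2m+1} for a unique symmetric polynomial K ∈ k[x_1,x_2]^{S_2}, and in particular deg P ≥ 2m+1. -/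
open MvPolynomial

private lemma perm_fin_two_aux : ∀ σ : Equiv.Perm (Fin 2), σ = 1 ∨ σ = Equiv.swap 0 1 := by
  decide

/-- `P ∈ k[x₁,x₂]` is `m`-quasi-invariant. -/
def QuasiInvariant2 (k : Type*) [Field k] (m : ℕ) (P : MvPolynomial (Fin 2) k) : Prop :=
  (X 0 - X 1 : MvPolynomial (Fin 2) k) ^ (2 * m + 1) ∣ P - rename (Equiv.swap 0 1) P

theorem quasiInvariant_sign_S2 (k : Type*) [Field k] (hk : ringChar k ≠ 2) (m : ℕ)
    (P : MvPolynomial (Fin 2) k) (hP0 : P ≠ 0)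
    (hqi : QuasiInvariant2 k m P)
    (hsign : rename (Equiv.swap (0 : Fin 2) 1) P = -P) :
    (∃! K : MvPolynomial (Fin 2) k,
        K.IsSymmetric ∧ P = K * (X 0 - X 1) ^ (2 * m + 1)) ∧
      2 * m + 1 ≤ P.totalDegree := by
  set d : MvPolynomial (Fin 2) k := X 0 - X 1 with hd_def
  set N : ℕ := 2 * m + 1 with hN
  have hd : d ≠ 0 := by
    intro h
    rw [hd_def, sub_eq_zero] at h
    exact (by decide : (0 : Fin 2) ≠ 1) (MvPolynomial.X_injective h)
  have hdN : d ^ N ≠ 0 := pow_ne_zero _ hd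
  have h2k : (2 : k) ≠ 0 := Ring.two_ne_zero hk
  have h2 : IsUnit (2 : MvPolynomial (Fin 2) k) := by
    have : (C (2 : k) : MvPolynomial (Fin 2) k) = 2 := by
      rw [map_ofNat]
    rw [← this]
    exact (isUnit_iff_ne_zero.mpr h2k).map (C : k →+* MvPolynomial (Fin 2) k)
  -- divisibility
  have hdvd2 : d ^ N ∣ 2 * P := by
    have := hqi
    rw [QuasiInvariant2, hsign, sub_neg_eq_add, ← two_mul] at this
    exact this
  have hdvd : d ^ N ∣ P := (IsUnit.dvd_mul_left h2).mp hdvd2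
  obtain ⟨K, hK⟩ := hdvd
  have hKP : P = K * d ^ N := by rw [hK, mul_comm]
  -- rename swap of d
  have hrd : rename (Equiv.swap (0 : Fin 2) 1) d = -d := by
    simp [hd_def, Equiv.swap_apply_left, Equiv.swap_apply_right]
  -- K is symmetric
  have hKsym : rename (Equiv.swap (0 : Fin 2) 1) K = K := by
    have h1 : rename (Equiv.swap (0 : Fin 2) 1) P
        = rename (Equiv.swap (0 : Fin 2) 1) K * (-d) ^ N := by
      rw [hKP, map_mul, map_pow, hrd]
    rw [hsign, hKP] at h1
    have hodd : (-d) ^ N = -d ^ N := by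
      rw [hN]
      exact Odd.neg_pow ⟨m, by ring⟩ d
    rw [hodd, mul_neg, neg_inj] at h1
    exact (mul_right_cancel₀ hdN h1.symm)
  have hKne : K ≠ 0 := by
    intro h; apply hP0; rw [hKP, h, zero_mul]
  constructor
  · refine ⟨K, ⟨?_, hKP⟩, ?_⟩
    · intro σ
      rcases perm_fin_two_aux σ with h | h
      · simp [h]
      · rw [h, hKsym]
    · rintro K' ⟨-, hK'⟩
      have : K' * d ^ N = K * d ^ N := by rw [← hK', hKP]
      exact mul_right_cancel₀ hdN this
  · -- degree bound via finSuccEquiv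
    have hEd : (finSuccEquiv k 1) d = Polynomial.X - Polynomial.C (X 0) := by
      rw [hd_def, map_sub, finSuccEquiv_X_zero,
        show (1 : Fin 2) = Fin.succ 0 from rfl, finSuccEquiv_X_succ]
    have hEK : (finSuccEquiv k 1) K ≠ 0 := by
      simpa using (map_ne_zero_iff _ (finSuccEquiv k 1).injective).mpr hKne
    have hXC : (Polynomial.X - Polynomial.C (X 0 : MvPolynomial (Fin 1) k)) ≠ 0 :=
      Polynomial.X_sub_C_ne_zero _
    have hdeg : ((finSuccEquiv k 1) P).natDegree =
        ((finSuccEquiv k 1) K).natDegree + N := by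
      rw [hKP, map_mul, map_pow, hEd,
        Polynomial.natDegree_mul hEK (pow_ne_zero _ hXC),
        Polynomial.natDegree_pow, Polynomial.natDegree_X_sub_C, mul_one]
    have h1 : N ≤ ((finSuccEquiv k 1) P).natDegree := by omega
    calc N ≤ ((finSuccEquiv k 1) P).natDegree := h1
      _ = degreeOf 0 P := natDegree_finSuccEquiv P
      _ ≤ P.totalDegree := degreeOf_le_totalDegree P 0
end

section
/- Let n = 3 and char k ≠ 2. Suppose P ∈ k[x_1,x_2,x_3] is m-quasi-invariant, satisfies s_{1,2}·P = -P, and P + s·P + s²·P = 0 where s = (1 2 3). Then P = (x_1 - x_2)^{2m+1}·K for some polynomial K invariant under s_{1,2}. -/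
open MvPolynomial

/-- `P ∈ k[x₁,x₂,x₃]` is `m`-quasi-invariant. -/
def QuasiInvariant3 (k : Type*) [Field k] (m : ℕ) (P : MvPolynomial (Fin 3) k) : Prop :=
  ∀ i j : Fin 3, i ≠ j →
    (X i - X j) ^ (2 * m + 1) ∣ P - rename (Equiv.swap i j) P

theorem std_eigenvector_form (k : Type*) [Field k] (hk : ringChar k ≠ 2) (m : ℕ)
    (P : MvPolynomial (Fin 3) k) (hqi : QuasiInvariant3 k m P)
    (hsign : rename (Equiv.swap (0 : Fin 3) 1) P = -P)
    (hsum : P + rename (finRotate 3) P + rename (finRotate 3) (rename (finRotate 3) P) = 0) :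
    ∃ K : MvPolynomial (Fin 3) k,
      rename (Equiv.swap (0 : Fin 3) 1) K = K ∧ P = (X 0 - X 1) ^ (2 * m + 1) * K := by
  have h2k : (2 : k) ≠ 0 := Ring.two_ne_zero hk
  have h2 : IsUnit (2 : MvPolynomial (Fin 3) k) := by
    have h : (2 : MvPolynomial (Fin 3) k) = C (2 : k) := by simp [map_ofNat]
    rw [h]
    exact (isUnit_iff_ne_zero.mpr h2k).map C
  have hdvd : (X 0 - X 1 : MvPolynomial (Fin 3) k) ^ (2 * m + 1) ∣ 2 * P := by
    have := hqi 0 1 (by decide)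
    rw [hsign] at this
    convert this using 1
    ring
  have hdvdP : (X 0 - X 1 : MvPolynomial (Fin 3) k) ^ (2 * m + 1) ∣ P :=
    h2.dvd_mul_left.mp hdvd
  obtain ⟨K, hK⟩ := hdvdP
  refine ⟨K, ?_, hK⟩
  have hswapX : rename (Equiv.swap (0 : Fin 3) 1) (X 0 - X 1 : MvPolynomial (Fin 3) k)
      = -(X 0 - X 1) := by
    simp [Equiv.swap_apply_left, Equiv.swap_apply_right]
  have hne : (X 0 - X 1 : MvPolynomial (Fin 3) k) ^ (2 * m + 1) ≠ 0 := by
    apply pow_ne_zero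
    rw [sub_ne_zero]
    intro h
    have := congrArg (fun p => coeff (Finsupp.single (0 : Fin 3) 1) p) h
    simp [coeff_X', Finsupp.single_eq_single_iff] at this
    
  have key : rename (Equiv.swap (0 : Fin 3) 1) P
      = -((X 0 - X 1) ^ (2 * m + 1)) * rename (Equiv.swap (0 : Fin 3) 1) K := by
    rw [hK, map_mul, map_pow, hswapX]
    rw [Odd.neg_pow ⟨m, by ring⟩]
  rw [hsign, hK] at key
  have : (X 0 - X 1 : MvPolynomial (Fin 3) k) ^ (2 * m + 1)
      * (rename (Equiv.swap (0 : Fin 3) 1) K - K) = 0 := by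
    linear_combination key
  rcases mul_eq_zero.mp this with h | h
  · exact absurd h hne
  · exact sub_eq_zero.mp h
end

section
/- Let n = 3. Suppose K ∈ k[x_1,x_2,x_3] is invariant under s_{1,2} and satisfies (x_1-x_2)^{2m+1}·K + (x_2-x_3)^{2m+1}·(s·K) + (x_3-x_1)^{2m+1}·(s²·K) = 0, where s = (1 2 3). Then the polynomial P = (x_1-x_2)^{2m+1}·K is m-quasi-invariant. -/
open MvPolynomial

theorem std_eigenvector_converse (k : Type*) [Field k] (m : ℕ)
    (K : MvPolynomial (Fin 3) k)
    (hK : rename (Equiv.swap (0 : Fin 3) 1) K = K)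
    (hrel : (X 0 - X 1) ^ (2 * m + 1) * K
        + (X 1 - X 2) ^ (2 * m + 1) * rename (finRotate 3) K
        + (X 2 - X 0) ^ (2 * m + 1) * rename (finRotate 3) (rename (finRotate 3) K) = 0) :
    QuasiInvariant3 k m ((X 0 - X 1) ^ (2 * m + 1) * K) := by
  have hodd : Odd (2 * m + 1) := ⟨m, by ring⟩
  set K1 := rename (finRotate 3) K with hK1
  set K2 := rename (finRotate 3) K1 with hK2
  set P := (X (0 : Fin 3) - X 1) ^ (2 * m + 1) * K with hP
  have hf02 : ⇑(Equiv.swap (0 : Fin 3) 2) ∘ ⇑(Equiv.swap (0 : Fin 3) 1)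
      = ⇑(finRotate 3) := by funext x; fin_cases x <;> rfl
  have hf12 : ⇑(Equiv.swap (1 : Fin 3) 2) ∘ ⇑(Equiv.swap (0 : Fin 3) 1)
      = ⇑(finRotate 3) ∘ ⇑(finRotate 3) := by funext x; fin_cases x <;> rfl
  have h02 : rename (Equiv.swap (0 : Fin 3) 2) K = K1 := by
    conv_lhs => rw [← hK, rename_rename, hf02]
  have h12 : rename (Equiv.swap (1 : Fin 3) 2) K = K2 := by
    conv_lhs => rw [← hK, rename_rename, hf12, ← rename_rename]
  have e01 : ((X 1 - X 0 : MvPolynomial (Fin 3) k)) ^ (2 * m + 1)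
      = -((X 0 - X 1) ^ (2 * m + 1)) := by
    rw [show (X 1 - X 0 : MvPolynomial (Fin 3) k) = -(X 0 - X 1) by ring, hodd.neg_pow]
  have e12 : ((X 2 - X 1 : MvPolynomial (Fin 3) k)) ^ (2 * m + 1)
      = -((X 1 - X 2) ^ (2 * m + 1)) := by
    rw [show (X 2 - X 1 : MvPolynomial (Fin 3) k) = -(X 1 - X 2) by ring, hodd.neg_pow]
  have e20 : ((X 0 - X 2 : MvPolynomial (Fin 3) k)) ^ (2 * m + 1)
      = -((X 2 - X 0) ^ (2 * m + 1)) := by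
    rw [show (X 0 - X 2 : MvPolynomial (Fin 3) k) = -(X 2 - X 0) by ring, hodd.neg_pow]
  -- images of P under the three transpositions
  have r01 : rename (Equiv.swap (0 : Fin 3) 1) P = -P := by
    rw [hP, map_mul, map_pow, map_sub, rename_X, rename_X, hK,
      Equiv.swap_apply_left, Equiv.swap_apply_right, e01]
    ring
  have r02 : rename (Equiv.swap (0 : Fin 3) 2) P
      = (X 2 - X 1) ^ (2 * m + 1) * K1 := by
    rw [hP, map_mul, map_pow, map_sub, rename_X, rename_X, h02,
      Equiv.swap_apply_left, Equiv.swap_apply_of_ne_of_ne (by decide) (by decide)]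
  have r12 : rename (Equiv.swap (1 : Fin 3) 2) P
      = (X 0 - X 2) ^ (2 * m + 1) * K2 := by
    rw [hP, map_mul, map_pow, map_sub, rename_X, rename_X, h12,
      Equiv.swap_apply_left, Equiv.swap_apply_of_ne_of_ne (by decide) (by decide)]
  have main01 : (X (0 : Fin 3) - X 1) ^ (2 * m + 1) ∣ P - rename (Equiv.swap (0 : Fin 3) 1) P := by
    rw [r01]; exact ⟨2 * K, by rw [hP]; ring⟩
  have main10 : (X (1 : Fin 3) - X 0) ^ (2 * m + 1) ∣ P - rename (Equiv.swap (1 : Fin 3) 0) P := by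
    rw [Equiv.swap_comm, r01, e01]; exact ⟨-(2 * K), by rw [hP]; ring⟩
  have main02 : (X (0 : Fin 3) - X 2) ^ (2 * m + 1) ∣ P - rename (Equiv.swap (0 : Fin 3) 2) P := by
    rw [r02, e20]
    refine ⟨K2, ?_⟩
    rw [e12, hP]
    linear_combination hrel
  have main20 : (X (2 : Fin 3) - X 0) ^ (2 * m + 1) ∣ P - rename (Equiv.swap (2 : Fin 3) 0) P := by
    rw [Equiv.swap_comm, r02]
    refine ⟨-K2, ?_⟩
    rw [e12, hP]
    linear_combination hrel
  have main12 : (X (1 : Fin 3) - X 2) ^ (2 * m + 1) ∣ P - rename (Equiv.swap (1 : Fin 3) 2) P := by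
    rw [r12]
    refine ⟨-K1, ?_⟩
    rw [e20, hP]
    linear_combination hrel
  have main21 : (X (2 : Fin 3) - X 1) ^ (2 * m + 1) ∣ P - rename (Equiv.swap (2 : Fin 3) 1) P := by
    rw [Equiv.swap_comm, r12, e12]
    refine ⟨K1, ?_⟩
    rw [e20, hP]
    linear_combination hrel
  intro i j hij
  fin_cases i <;> fin_cases j
  · exact absurd rfl hij
  · exact main01
  · exact main02
  · exact main10
  · exact absurd rfl hij
  · exact main12
  · exact main20
  · exact main21
  · exact absurd rfl hij
end

section
/- Any polynomial P ∈ k[x_1,x_2,x_3] can be written uniquely as P = P' + P'' where P' is divisible by x_1+x_2+x_3 and P'' ∈ k[x_1-x_3, x_2-x_3] (the subalgebra generated by x_1-x_3 and x_2-x_3). Moreover, if P is m-quasi-invariant then both P' and P'' are m-quasi-invariant. -/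
open MvPolynomial

noncomputable def phiSum (k : Type*) [Field k] :
    MvPolynomial (Fin 3) k →ₐ[k] MvPolynomial (Fin 3) k :=
  aeval fun i => X i - C (3⁻¹ : k) * (X 0 + X 1 + X 2)

section Aux

variable {k : Type*} [Field k]

lemma phiSum_X (i : Fin 3) :
    phiSum k (X i) = X i - C (3⁻¹ : k) * (X 0 + X 1 + X 2) := by
  simp [phiSum]

lemma C3 (hk : (3 : k) ≠ 0) :
    (C (3⁻¹ : k) : MvPolynomial (Fin 3) k) * 3 = 1 := by
  have h := map_ofNat (C : k →+* MvPolynomial (Fin 3) k) 3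
  rw [← h, ← C_mul, inv_mul_cancel₀ hk, C_1]

lemma phiSum_s (hk : (3 : k) ≠ 0) :
    phiSum k (X 0 + X 1 + X 2 : MvPolynomial (Fin 3) k) = 0 := by
  have h1 := C3 (k := k) hk
  simp only [map_add, phiSum_X]
  linear_combination (-(X 0 + X 1 + X 2) : MvPolynomial (Fin 3) k) * h1

lemma rename_s (σ : Equiv.Perm (Fin 3)) :
    rename σ (X 0 + X 1 + X 2 : MvPolynomial (Fin 3) k) = X 0 + X 1 + X 2 := by
  have h : (X 0 + X 1 + X 2 : MvPolynomial (Fin 3) k) = ∑ i, X i := by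
    rw [Fin.sum_univ_three]
  rw [h, map_sum]
  simp only [rename_X]
  exact Fintype.sum_equiv σ _ _ fun i => rfl

lemma rename_phiSum (σ : Equiv.Perm (Fin 3)) (P : MvPolynomial (Fin 3) k) :
    rename σ (phiSum k P) = phiSum k (rename σ P) := by
  have h : (rename (σ : Fin 3 → Fin 3)).comp (phiSum k)
      = (phiSum k).comp (rename (σ : Fin 3 → Fin 3)) := by
    apply MvPolynomial.algHom_ext
    intro i
    simp only [AlgHom.comp_apply, rename_X, phiSum_X, map_sub, map_mul, rename_C, map_add]
    have hs := rename_s (k := k) σ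
    simp only [map_add, rename_X] at hs
    rw [hs]
  exact DFunLike.congr_fun h P

lemma dvd_sub_phiSum (P : MvPolynomial (Fin 3) k) :
    (X 0 + X 1 + X 2 : MvPolynomial (Fin 3) k) ∣ P - phiSum k P := by
  induction P using MvPolynomial.induction_on with
  | C a => simp [phiSum]
  | add p q hp hq =>
      rw [map_add, show p + q - (phiSum k p + phiSum k q)
        = (p - phiSum k p) + (q - phiSum k q) by ring]
      exact dvd_add hp hq
  | mul_X p i hp =>
      rw [map_mul, phiSum_X, show p * X i - phiSum k p * (X i - C (3⁻¹ : k) * (X 0 + X 1 + X 2))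
        = (p - phiSum k p) * X i + (C (3⁻¹ : k) * phiSum k p) * (X 0 + X 1 + X 2) by ring]
      exact dvd_add (hp.mul_right _) (dvd_mul_left _ _)

lemma phiSum_fix {Q : MvPolynomial (Fin 3) k}
    (hQ : Q ∈ Algebra.adjoin k {(X 0 - X 2 : MvPolynomial (Fin 3) k), X 1 - X 2}) :
    phiSum k Q = Q := by
  have h : Algebra.adjoin k {(X 0 - X 2 : MvPolynomial (Fin 3) k), X 1 - X 2}
      ≤ AlgHom.equalizer (phiSum k) (AlgHom.id k _) := by
    apply Algebra.adjoin_le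
    rintro x (rfl | rfl) <;>
      · show phiSum k _ = _
        simp only [map_sub, phiSum_X, AlgHom.coe_id, id_eq]
        ring
  exact h hQ

lemma phiSum_mem (P : MvPolynomial (Fin 3) k) (hk : (3 : k) ≠ 0) :
    phiSum k P ∈ Algebra.adjoin k {(X 0 - X 2 : MvPolynomial (Fin 3) k), X 1 - X 2} := by
  set S := Algebra.adjoin k {(X 0 - X 2 : MvPolynomial (Fin 3) k), X 1 - X 2} with hS
  have hv : (X 0 - X 2 : MvPolynomial (Fin 3) k) ∈ S :=
    Algebra.subset_adjoin (Set.mem_insert _ _)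
  have hw : (X 1 - X 2 : MvPolynomial (Fin 3) k) ∈ S :=
    Algebra.subset_adjoin (Set.mem_insert_of_mem _ rfl)
  have h1 := C3 (k := k) hk
  have key : ∀ i : Fin 3, phiSum k (X i) ∈ S := by
    intro i
    rw [phiSum_X]
    fin_cases i
    · show (X 0 : MvPolynomial (Fin 3) k) - C (3⁻¹ : k) * (X 0 + X 1 + X 2) ∈ S
      rw [show (X 0 : MvPolynomial (Fin 3) k) - C (3⁻¹ : k) * (X 0 + X 1 + X 2)
        = C (3⁻¹ : k) * ((X 0 - X 2) + (X 0 - X 2) - (X 1 - X 2)) by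
          linear_combination (-(X (0 : Fin 3)) : MvPolynomial (Fin 3) k) * h1]
      exact S.mul_mem (S.algebraMap_mem _) (S.sub_mem (S.add_mem hv hv) hw)
    · show (X 1 : MvPolynomial (Fin 3) k) - C (3⁻¹ : k) * (X 0 + X 1 + X 2) ∈ S
      rw [show (X 1 : MvPolynomial (Fin 3) k) - C (3⁻¹ : k) * (X 0 + X 1 + X 2)
        = C (3⁻¹ : k) * ((X 1 - X 2) + (X 1 - X 2) - (X 0 - X 2)) by
          linear_combination (-(X (1 : Fin 3)) : MvPolynomial (Fin 3) k) * h1]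
      exact S.mul_mem (S.algebraMap_mem _) (S.sub_mem (S.add_mem hw hw) hv)
    · show (X 2 : MvPolynomial (Fin 3) k) - C (3⁻¹ : k) * (X 0 + X 1 + X 2) ∈ S
      rw [show (X 2 : MvPolynomial (Fin 3) k) - C (3⁻¹ : k) * (X 0 + X 1 + X 2)
        = C (3⁻¹ : k) * (-(X 0 - X 2) - (X 1 - X 2)) by
          linear_combination (-(X (2 : Fin 3)) : MvPolynomial (Fin 3) k) * h1]
      exact S.mul_mem (S.algebraMap_mem _) (S.sub_mem (S.neg_mem hv) hw)
  have h : Algebra.adjoin k (Set.range (X : Fin 3 → MvPolynomial (Fin 3) k))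
      ≤ S.comap (phiSum k) := by
    apply Algebra.adjoin_le
    rintro x ⟨i, rfl⟩
    exact key i
  have htop := MvPolynomial.adjoin_range_X (R := k) (σ := Fin 3)
  have : P ∈ Algebra.adjoin k (Set.range (X : Fin 3 → MvPolynomial (Fin 3) k)) := by
    rw [htop]; trivial
  exact h this

lemma phiSum_eq_zero (hk : (3 : k) ≠ 0) {Q : MvPolynomial (Fin 3) k}
    (hdvd : (X 0 + X 1 + X 2 : MvPolynomial (Fin 3) k) ∣ Q)
    (hmem : Q ∈ Algebra.adjoin k {(X 0 - X 2 : MvPolynomial (Fin 3) k), X 1 - X 2}) :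
    Q = 0 := by
  obtain ⟨A, rfl⟩ := hdvd
  have := phiSum_fix hmem
  rw [map_mul, phiSum_s hk, zero_mul] at this
  exact this.symm

lemma quasi_phiSum {m : ℕ} {P : MvPolynomial (Fin 3) k} (hP : QuasiInvariant3 k m P) :
    QuasiInvariant3 k m (phiSum k P) := by
  intro i j hij
  obtain ⟨Q, hQ⟩ := hP i j hij
  refine ⟨phiSum k Q, ?_⟩
  have := congrArg (phiSum k) hQ
  rw [map_sub, map_mul, map_pow, map_sub, phiSum_X, phiSum_X,
    show (X i : MvPolynomial (Fin 3) k) - C (3⁻¹ : k) * (X 0 + X 1 + X 2)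
      - (X j - C (3⁻¹ : k) * (X 0 + X 1 + X 2)) = X i - X j by ring,
    ← rename_phiSum] at this
  exact this

end Aux

theorem decomposition_along_sum (k : Type*) [Field k] (hk : (3 : k) ≠ 0) (m : ℕ)
    (P : MvPolynomial (Fin 3) k) :
    (∃! PP : MvPolynomial (Fin 3) k × MvPolynomial (Fin 3) k,
        ((X 0 + X 1 + X 2 : MvPolynomial (Fin 3) k) ∣ PP.1) ∧
        PP.2 ∈ Algebra.adjoin k {(X 0 - X 2 : MvPolynomial (Fin 3) k), X 1 - X 2} ∧
        P = PP.1 + PP.2) ∧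
    (QuasiInvariant3 k m P →
      ∀ P' P'' : MvPolynomial (Fin 3) k,
        (X 0 + X 1 + X 2 : MvPolynomial (Fin 3) k) ∣ P' →
        P'' ∈ Algebra.adjoin k {(X 0 - X 2 : MvPolynomial (Fin 3) k), X 1 - X 2} →
        P = P' + P'' →
        QuasiInvariant3 k m P' ∧ QuasiInvariant3 k m P'') := by
  have huniq : ∀ P' P'' : MvPolynomial (Fin 3) k,
      (X 0 + X 1 + X 2 : MvPolynomial (Fin 3) k) ∣ P' →
      P'' ∈ Algebra.adjoin k {(X 0 - X 2 : MvPolynomial (Fin 3) k), X 1 - X 2} →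
      P = P' + P'' → P'' = phiSum k P := by
    intro P' P'' hd hmem heq
    have hd2 : (X 0 + X 1 + X 2 : MvPolynomial (Fin 3) k) ∣ P'' - phiSum k P := by
      have h1 : P'' - phiSum k P = (P - phiSum k P) - P' := by
        rw [heq]; ring
      rw [h1]
      exact dvd_sub (dvd_sub_phiSum P) hd
    have hmem2 : P'' - phiSum k P ∈
        Algebra.adjoin k {(X 0 - X 2 : MvPolynomial (Fin 3) k), X 1 - X 2} :=
      Subalgebra.sub_mem _ hmem (phiSum_mem P hk)
    exact sub_eq_zero.mp (phiSum_eq_zero hk hd2 hmem2)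
  constructor
  · refine ⟨⟨P - phiSum k P, phiSum k P⟩, ⟨dvd_sub_phiSum P, phiSum_mem P hk, by ring⟩, ?_⟩
    rintro ⟨Q1, Q2⟩ ⟨h1, h2, h3⟩
    have hQ2 : Q2 = phiSum k P := huniq Q1 Q2 h1 h2 h3
    have hQ1 : Q1 = P - phiSum k P := by linear_combination -h3 - hQ2
    exact Prod.ext hQ1 hQ2
  · intro hP P' P'' hd hmem heq
    have hP'' : P'' = phiSum k P := huniq P' P'' hd hmem heq
    have hq2 : QuasiInvariant3 k m P'' := hP'' ▸ quasi_phiSum hP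
    refine ⟨?_, hq2⟩
    intro i j hij
    obtain ⟨Q, hQ⟩ := hP i j hij
    obtain ⟨R, hR⟩ := hq2 i j hij
    refine ⟨Q - R, ?_⟩
    have hP' : P' = P - P'' := by rw [heq]; ring
    rw [hP', map_sub, mul_sub, ← hQ, ← hR]
    ring
end
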